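/- For every real r > 1 there exists a constant C_r > 0 such that for every τ ≥ 0 and all a, b, c : ℤ² → [0,∞]: ∑_{(j,k)∈ℤ²×ℤ²} a(j) · ‖k‖ · b(k) · ‖j+k‖^{r} e^{τ‖j+k‖} · c(j+k) ≤ C_r [ (a(0) + S_{r,τ}(a)) · S_{r+1/2,τ}(b) · S_{r+1/2,τ}(c) + S_{r+1/2,τ}(a) · S_{r+1/2,τ}(b) · S_{r,τ}(c) ]. (This is the Fourier-coefficient form of the trilinear transport estimate |⟨A^r e^{τA}(f·∇g), A^r e^{τA}h⟩| of Lemma A.1.) -/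

import Mathlib

/-!
Off the origin a lattice point has `‖k‖ ≥ 1`, so `‖k‖ ≤ ‖k‖^(r+1/2) e^(τ‖k‖)` and
`‖j+k‖^r ≤ ‖j+k‖^(r+1/2)`. The sum is therefore at most `∑ a(j) B(k) H(j+k)`, where `B`, `H` are
the weighted sequences whose ℓ²-norms are `S_{r+1/2,τ}(b)`, `S_{r+1/2,τ}(c)`; by Cauchy–Schwarz in
`k` this is at most `‖a‖_{ℓ¹} ‖B‖_{ℓ²} ‖H‖_{ℓ²}`. Cauchy–Schwarz once more gives
`‖a‖_{ℓ¹} ≤ a(0) + (∑_{j ≠ 0} ‖j‖^(-2r))^(1/2) S_{r,τ}(a)`, and the lattice sum converges as `2r > 2`.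
-/

open scoped ENNReal

noncomputable section

/-- Euclidean norm of a lattice point `k ∈ ℤ²` viewed as a vector in `ℝ²`. -/
def nz (k : ℤ × ℤ) : ℝ := Real.sqrt ((k.1 : ℝ) ^ 2 + (k.2 : ℝ) ^ 2)

/-- The weighted ℓ²-norm `S_{ρ,τ}(a) = (∑_k ‖k‖^{2ρ} e^{2τ‖k‖} a(k)²)^{1/2}`. -/
def S (ρ τ : ℝ) (a : ℤ × ℤ → ℝ≥0∞) : ℝ≥0∞ :=
  (∑' k : ℤ × ℤ, ENNReal.ofReal (nz k ^ (2 * ρ) * Real.exp (2 * τ * nz k)) * (a k) ^ 2)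
    ^ ((1 : ℝ) / 2)

lemma nz_nonneg (k : ℤ × ℤ) : 0 ≤ nz k := Real.sqrt_nonneg _

lemma nz_zero : nz 0 = 0 := by simp [nz]

lemma one_le_nz {k : ℤ × ℤ} (hk : k ≠ 0) : 1 ≤ nz k := by
  obtain ⟨x, y⟩ := k
  have hxy : x ≠ 0 ∨ y ≠ 0 := by contrapose! hk; simp [hk]
  have hpos : (0 : ℤ) < x ^ 2 + y ^ 2 := by rcases hxy with h | h <;> positivity
  exact Real.one_le_sqrt.mpr (by exact_mod_cast hpos)

lemma nz_rpow_le_rpow (k : ℤ × ℤ) {s t : ℝ} (hs : 0 < s) (hst : s ≤ t) :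
    nz k ^ s ≤ nz k ^ t := by
  rcases eq_or_ne k 0 with rfl | hk
  · simp [nz_zero, Real.zero_rpow hs.ne', Real.zero_rpow (hs.trans_le hst).ne']
  · exact Real.rpow_le_rpow_of_exponent_le (one_le_nz hk) hst

lemma summable_nz_rpow_neg {s : ℝ} (hs : 2 < s) : Summable fun k : ℤ × ℤ ↦ nz k ^ (-s) := by
  rw [← (finTwoArrowEquiv ℤ).summable_iff]
  refine (EisensteinSeries.summable_one_div_norm_rpow hs).of_nonneg_of_le
    (fun _ ↦ Real.rpow_nonneg (nz_nonneg _) _) fun x ↦ ?_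
  rcases eq_or_ne x 0 with rfl | hx
  · simp [finTwoArrowEquiv, nz, Real.zero_rpow (by linarith : -s ≠ 0)]
  have hle : ‖x‖ ≤ nz (x 0, x 1) := by
    refine (pi_norm_le_iff_of_nonneg (nz_nonneg _)).mpr fun i ↦ ?_
    rw [Int.norm_eq_abs]
    refine Real.abs_le_sqrt ?_
    fin_cases i <;> simp [sq_nonneg]
  exact Real.rpow_le_rpow_of_nonpos (norm_pos_iff.mpr hx) hle (by linarith)

def l2Norm {α : Type*} (f : α → ℝ≥0∞) : ℝ≥0∞ := (∑' i, f i ^ 2) ^ ((1 : ℝ) / 2)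

lemma tsum_mul_le_l2Norm_mul {α : Type*} (f g : α → ℝ≥0∞) :
    ∑' i, f i * g i ≤ l2Norm f * l2Norm g := by
  let _ : MeasurableSpace α := ⊤
  have h := ENNReal.lintegral_mul_le_Lp_mul_Lq MeasureTheory.Measure.count
    Real.HolderConjugate.two_two (f := f) (g := g) Measurable.of_discrete.aemeasurable
    Measurable.of_discrete.aemeasurable
  simpa only [l2Norm, Pi.mul_apply, MeasureTheory.lintegral_count, ENNReal.rpow_two] using h

lemma tsum_mul_mul_add_le {G : Type*} [AddGroup G] (A B H : G → ℝ≥0∞) :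
    ∑' p : G × G, A p.1 * (B p.2 * H (p.1 + p.2)) ≤ (∑' j, A j) * (l2Norm B * l2Norm H) := by
  have hshift (j : G) : l2Norm (fun k ↦ H (j + k)) = l2Norm H := by
    rw [l2Norm, l2Norm, ← (Equiv.addLeft j).tsum_eq fun m ↦ H m ^ 2]
    rfl
  calc ∑' p : G × G, A p.1 * (B p.2 * H (p.1 + p.2))
      = ∑' j, A j * ∑' k, B k * H (j + k) := by
        rw [ENNReal.tsum_prod (f := fun j k ↦ A j * (B k * H (j + k)))]
        simp only [ENNReal.tsum_mul_left]
    _ ≤ ∑' j, A j * (l2Norm B * l2Norm H) := by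
        gcongr with j
        exact (tsum_mul_le_l2Norm_mul B _).trans_eq (by rw [hshift])
    _ = (∑' j, A j) * (l2Norm B * l2Norm H) := ENNReal.tsum_mul_right

def weight (ρ τ : ℝ) (k : ℤ × ℤ) : ℝ := nz k ^ ρ * Real.exp (τ * nz k)

lemma weight_nonneg (ρ τ : ℝ) (k : ℤ × ℤ) : 0 ≤ weight ρ τ k := by
  unfold weight; have := nz_nonneg k; positivity

lemma weight_le_weight (τ : ℝ) (k : ℤ × ℤ) {s t : ℝ} (hs : 0 < s) (hst : s ≤ t) :
    weight s τ k ≤ weight t τ k :=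
  mul_le_mul_of_nonneg_right (nz_rpow_le_rpow k hs hst) (Real.exp_nonneg _)

lemma nz_le_weight (k : ℤ × ℤ) {t τ : ℝ} (ht : 1 ≤ t) (hτ : 0 ≤ τ) : nz k ≤ weight t τ k := by
  calc nz k = nz k ^ (1 : ℝ) := (Real.rpow_one _).symm
    _ ≤ nz k ^ t := nz_rpow_le_rpow k one_pos ht
    _ ≤ weight t τ k :=
        le_mul_of_one_le_right (by have := nz_nonneg k; positivity)
          (Real.one_le_exp (mul_nonneg hτ (nz_nonneg k)))

lemma weight_sq (ρ τ : ℝ) (k : ℤ × ℤ) :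
    weight ρ τ k ^ 2 = nz k ^ (2 * ρ) * Real.exp (2 * τ * nz k) := by
  rw [weight, mul_pow, ← Real.rpow_mul_natCast (nz_nonneg k), ← Real.exp_nat_mul]
  ring_nf

def weighted (ρ τ : ℝ) (f : ℤ × ℤ → ℝ≥0∞) (k : ℤ × ℤ) : ℝ≥0∞ :=
  ENNReal.ofReal (weight ρ τ k) * f k

lemma S_eq_l2Norm_weighted (ρ τ : ℝ) (f : ℤ × ℤ → ℝ≥0∞) :
    S ρ τ f = l2Norm (weighted ρ τ f) := by
  simp only [S, l2Norm, weighted, mul_pow, ← ENNReal.ofReal_pow (weight_nonneg ρ τ _), weight_sq]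

lemma tsum_le_add_mul_S (r τ : ℝ) (hτ : 0 ≤ τ) (a : ℤ × ℤ → ℝ≥0∞) :
    ∑' j, a j ≤ a 0 + l2Norm (fun j ↦ ENNReal.ofReal (nz j ^ (-r))) * S r τ a := by
  rw [ENNReal.tsum_eq_add_tsum_ite 0, S_eq_l2Norm_weighted]
  gcongr
  refine le_trans (ENNReal.tsum_le_tsum fun j ↦ ?_) (tsum_mul_le_l2Norm_mul _ _)
  split_ifs with hj
  · exact zero_le
  have hnz : 0 < nz j := one_pos.trans_le (one_le_nz hj)
  calc a j ≤ ENNReal.ofReal (nz j ^ (-r) * weight r τ j) * a j := by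
        refine le_mul_of_one_le_left zero_le (ENNReal.one_le_ofReal.mpr ?_)
        rw [weight, ← mul_assoc, ← Real.rpow_add hnz, neg_add_cancel, Real.rpow_zero, one_mul]
        exact Real.one_le_exp (mul_nonneg hτ hnz.le)
    _ = ENNReal.ofReal (nz j ^ (-r)) * weighted r τ a j := by
        rw [weighted, ENNReal.ofReal_mul (Real.rpow_nonneg hnz.le _), mul_assoc]

lemma nz_mul_weight_le {r τ : ℝ} (hr : 1 / 2 ≤ r) (hτ : 0 ≤ τ) (k m : ℤ × ℤ) :
    nz k * weight r τ m ≤ weight (r + 1 / 2) τ k * weight (r + 1 / 2) τ m :=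
  mul_le_mul (nz_le_weight k (by linarith) hτ) (weight_le_weight τ m (by linarith) (by linarith))
    (weight_nonneg r τ m) (weight_nonneg _ τ k)

lemma l2Norm_nz_rpow_neg_ne_top {r : ℝ} (hr : 1 < r) :
    l2Norm (fun j ↦ ENNReal.ofReal (nz j ^ (-r))) ≠ ⊤ := by
  have hsum : Summable fun j ↦ (nz j ^ (-r)) ^ 2 := by
    refine (summable_nz_rpow_neg (s := 2 * r) (by linarith)).congr fun j ↦ ?_
    rw [← Real.rpow_mul_natCast (nz_nonneg j)]
    ring_nf
  refine ENNReal.rpow_ne_top_of_nonneg (by norm_num) ?_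
  simp only [← ENNReal.ofReal_pow (Real.rpow_nonneg (nz_nonneg _) _)]
  rw [← ENNReal.ofReal_tsum_of_nonneg (fun _ ↦ by positivity) hsum]
  exact ENNReal.ofReal_ne_top

lemma transport_term_le {r τ : ℝ} (hr : 1 / 2 ≤ r) (hτ : 0 ≤ τ) (a b c : ℤ × ℤ → ℝ≥0∞)
    (j k : ℤ × ℤ) :
    a j * ENNReal.ofReal (nz k) * b k * ENNReal.ofReal (weight r τ (j + k)) * c (j + k)
      ≤ a j * (weighted (r + 1 / 2) τ b k * weighted (r + 1 / 2) τ c (j + k)) := by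
  have hweights : ENNReal.ofReal (nz k) * ENNReal.ofReal (weight r τ (j + k))
      ≤ ENNReal.ofReal (weight (r + 1 / 2) τ k) * ENNReal.ofReal (weight (r + 1 / 2) τ (j + k)) := by
    rw [← ENNReal.ofReal_mul (nz_nonneg k), ← ENNReal.ofReal_mul (weight_nonneg _ τ k)]
    exact ENNReal.ofReal_le_ofReal (nz_mul_weight_le hr hτ k (j + k))
  calc a j * ENNReal.ofReal (nz k) * b k * ENNReal.ofReal (weight r τ (j + k)) * c (j + k)
      = a j * b k * c (j + k) * (ENNReal.ofReal (nz k) * ENNReal.ofReal (weight r τ (j + k))) := by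
        ring
    _ ≤ a j * b k * c (j + k) * (ENNReal.ofReal (weight (r + 1 / 2) τ k)
          * ENNReal.ofReal (weight (r + 1 / 2) τ (j + k))) := by gcongr
    _ = a j * (weighted (r + 1 / 2) τ b k * weighted (r + 1 / 2) τ c (j + k)) := by
        simp only [weighted]; ring

lemma add_mul_le_add_one_mul_add (x y K : ℝ≥0∞) : x + K * y ≤ (K + 1) * (x + y) :=
  calc x + K * y ≤ (x + y) + K * (x + y) := add_le_add le_self_add (by gcongr; exact le_add_self)
    _ = (K + 1) * (x + y) := by ring

/-- Fourier-coefficient form of the trilinear transport estimate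
`|⟨A^r e^{τA}(f·∇g), A^r e^{τA}h⟩|` of Lemma A.1. -/
theorem trilinear_transport_estimate :
    ∀ r : ℝ, 1 < r → ∃ C : ℝ, 0 < C ∧ ∀ τ : ℝ, 0 ≤ τ → ∀ a b c : ℤ × ℤ → ℝ≥0∞,
      (∑' p : (ℤ × ℤ) × (ℤ × ℤ),
          a p.1 * ENNReal.ofReal (nz p.2) * b p.2
            * ENNReal.ofReal (nz (p.1 + p.2) ^ r * Real.exp (τ * nz (p.1 + p.2)))
            * c (p.1 + p.2))
        ≤ ENNReal.ofReal C *
            ((a 0 + S r τ a) * S (r + 1 / 2) τ b * S (r + 1 / 2) τ c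
              + S (r + 1 / 2) τ a * S (r + 1 / 2) τ b * S r τ c) := by
  intro r hr
  set K := l2Norm (fun j ↦ ENNReal.ofReal (nz j ^ (-r)))
  refine ⟨K.toReal + 1, by positivity, fun τ hτ a b c ↦ ?_⟩
  have hC : ENNReal.ofReal (K.toReal + 1) = K + 1 := by
    rw [ENNReal.ofReal_add ENNReal.toReal_nonneg zero_le_one,
      ENNReal.ofReal_toReal (l2Norm_nz_rpow_neg_ne_top hr), ENNReal.ofReal_one]
  calc _ ≤ ∑' p : (ℤ × ℤ) × (ℤ × ℤ),
          a p.1 * (weighted (r + 1 / 2) τ b p.2 * weighted (r + 1 / 2) τ c (p.1 + p.2)) :=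
        ENNReal.tsum_le_tsum fun p ↦ transport_term_le (by linarith) hτ a b c p.1 p.2
    _ ≤ (∑' j, a j) * (S (r + 1 / 2) τ b * S (r + 1 / 2) τ c) := by
        simpa only [S_eq_l2Norm_weighted] using tsum_mul_mul_add_le a _ _
    _ ≤ (a 0 + K * S r τ a) * (S (r + 1 / 2) τ b * S (r + 1 / 2) τ c) := by
        gcongr; exact tsum_le_add_mul_S r τ hτ a
    _ ≤ (K + 1) * (a 0 + S r τ a) * (S (r + 1 / 2) τ b * S (r + 1 / 2) τ c) := by
        gcongr ?_ * _
        exact add_mul_le_add_one_mul_add _ _ _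
    _ ≤ _ := by rw [hC, mul_assoc, ← mul_assoc (a 0 + _)]; gcongr; exact le_self_add

end
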